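/- arXiv:1810.03699 — 7 statements merged into one kernel-verified Lean document; each statement's English description precedes it below -/
import Mathlib

section
/- The sequence of polynomials defined by F_0 = 1, F_1 = y_0 + 1, and F_k * F_{k-2} = y_0^k * y_1^{k-1} + F_{k-1}^2 for k ≥ 2 consists of polynomials in y_0, y_1 with nonnegative integer coefficients (i.e., each F_k is an element of ℤ[y_0,y_1] with nonnegative coefficients, despite being defined by division). -/
open MvPolynomial

noncomputable def kronPG : ℕ → MvPolynomial (Fin 2) ℤ × MvPolynomial (Fin 2) ℤ
  | 0 => (1, 0)
  | 1 => (X 0 + 1, X 0)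
  | (k + 2) =>
      (((kronPG (k+1)).1 + (X 0 * (kronPG (k+1)).1 + X 0 * X 1 * (kronPG (k+1)).2)),
       X 0 * (kronPG (k+1)).1 + X 0 * X 1 * (kronPG (k+1)).2)

lemma kronPG_gdiff : ∀ k, (kronPG (k+1)).2 = (kronPG (k+1)).1 - (kronPG k).1
  | 0 => by simp [kronPG]
  | (k+1) => by
      show X 0 * (kronPG (k+1)).1 + X 0 * X 1 * (kronPG (k+1)).2
        = ((kronPG (k+1)).1 + (X 0 * (kronPG (k+1)).1 + X 0 * X 1 * (kronPG (k+1)).2))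
          - (kronPG (k+1)).1
      ring

lemma kronPG_rec (k : ℕ) :
    (kronPG (k+2)).1 = (1 + X 0 + X 0 * X 1) * (kronPG (k+1)).1
      - X 0 * X 1 * (kronPG k).1 := by
  show ((kronPG (k+1)).1 + (X 0 * (kronPG (k+1)).1 + X 0 * X 1 * (kronPG (k+1)).2)) = _
  rw [kronPG_gdiff k]
  ring

lemma coeff_mul_nonneg {p q : MvPolynomial (Fin 2) ℤ}
    (hp : ∀ m, 0 ≤ p.coeff m) (hq : ∀ m, 0 ≤ q.coeff m) :
    ∀ m, 0 ≤ (p * q).coeff m := by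
  intro m
  rw [coeff_mul]
  exact Finset.sum_nonneg fun x _ => mul_nonneg (hp _) (hq _)

lemma coeff_X_nonneg (i : Fin 2) : ∀ m, 0 ≤ (X i : MvPolynomial (Fin 2) ℤ).coeff m := by
  intro m
  rw [coeff_X']
  split <;> norm_num

lemma kronPG_nonneg : ∀ k, (∀ m, 0 ≤ ((kronPG k).1).coeff m) ∧
    (∀ m, 0 ≤ ((kronPG k).2).coeff m)
  | 0 => by constructor <;> intro m <;> simp [kronPG, coeff_one] <;> split <;> norm_num
  | 1 => by
      refine ⟨fun m => ?_, fun m => coeff_X_nonneg 0 m⟩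
      simp only [kronPG, coeff_add]
      have := coeff_X_nonneg (0 : Fin 2) m
      have h1 : (0:ℤ) ≤ (1 : MvPolynomial (Fin 2) ℤ).coeff m := by
        rw [coeff_one]; split <;> norm_num
      linarith
  | (k+2) => by
      obtain ⟨hp, hg⟩ := kronPG_nonneg (k+1)
      have h2 : ∀ m, 0 ≤ (X 0 * (kronPG (k+1)).1
          + X 0 * X 1 * (kronPG (k+1)).2 : MvPolynomial (Fin 2) ℤ).coeff m := by
        intro m
        rw [coeff_add]
        have := coeff_mul_nonneg (coeff_X_nonneg 0) hp m
        have := coeff_mul_nonneg (coeff_mul_nonneg (coeff_X_nonneg 0) (coeff_X_nonneg 1)) hg m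
        linarith
      exact ⟨fun m => by
        show 0 ≤ ((kronPG (k+1)).1 + _).coeff m
        rw [coeff_add]; have := hp m; have := h2 m; linarith, h2⟩

lemma kronPG_const : ∀ k, constantCoeff ((kronPG k).1) = 1 ∧
    constantCoeff ((kronPG k).2) = 0
  | 0 => by simp [kronPG]
  | 1 => by simp [kronPG]
  | (k+2) => by
      obtain ⟨hp, hg⟩ := kronPG_const (k+1)
      constructor
      · show constantCoeff ((kronPG (k+1)).1 + _) = 1
        simp [hp, hg]
      · show constantCoeff (X 0 * (kronPG (k+1)).1 + X 0 * X 1 * (kronPG (k+1)).2) = 0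
        simp [hp, hg]

lemma kronPG_quad : ∀ k, (kronPG (k+2)).1 * (kronPG k).1
    = X 0 ^ (k+2) * X 1 ^ (k+1) + (kronPG (k+1)).1 ^ 2
  | 0 => by
      have h := kronPG_rec 0
      rw [h]
      show _ * (1 : MvPolynomial (Fin 2) ℤ) = X 0 ^ 2 * X 1 ^ 1 + (X 0 + 1) ^ 2
      show ((1 + X 0 + X 0 * X 1) * (X 0 + 1) - X 0 * X 1 * 1) * 1 = _
      ring
  | (k+1) => by
      have ih := kronPG_quad k
      have r1 := kronPG_rec k
      have r2 := kronPG_rec (k+1)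
      linear_combination (X 0 * X 1 : MvPolynomial (Fin 2) ℤ) * ih
        + (kronPG (k+1)).1 * r2 - (kronPG (k+2)).1 * r1

/-- The Kronecker F-polynomial recurrence, carried out in the field of rational
functions `Frac(ℚ[y₀,y₁])`, produces at every step an element which is (the image of)
a polynomial in `ℤ[y₀,y₁]` with nonnegative coefficients. -/
theorem kronecker_F_polynomials_are_positive_integer_polynomials
    (K : Type*) [Field K] [Algebra (MvPolynomial (Fin 2) ℚ) K]
    [IsFractionRing (MvPolynomial (Fin 2) ℚ) K]
    (F : ℕ → K)
    (h0 : F 0 = 1)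
    (h1 : F 1 = algebraMap (MvPolynomial (Fin 2) ℚ) K (X 0) + 1)
    (hrec : ∀ k, 2 ≤ k →
      F k * F (k - 2) =
        algebraMap (MvPolynomial (Fin 2) ℚ) K ((X 0) ^ k * (X 1) ^ (k - 1))
          + F (k - 1) ^ 2) :
    ∀ k, ∃ p : MvPolynomial (Fin 2) ℤ,
      (∀ m, 0 ≤ p.coeff m) ∧
      algebraMap (MvPolynomial (Fin 2) ℚ) K (p.map (Int.castRingHom ℚ)) = F k := by
  set ψ : MvPolynomial (Fin 2) ℤ →+* K :=
    (algebraMap (MvPolynomial (Fin 2) ℚ) K).comp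
      (MvPolynomial.map (Int.castRingHom ℚ)) with hψ
  have ψinj : Function.Injective ψ :=
    (IsFractionRing.injective (MvPolynomial (Fin 2) ℚ) K).comp
      (MvPolynomial.map_injective _ Int.cast_injective)
  have key : ∀ k, F k = ψ ((kronPG k).1) ∧ F (k+1) = ψ ((kronPG (k+1)).1) := by
    intro k
    induction k with
    | zero =>
        constructor
        · simp [kronPG, h0, hψ]
        · rw [h1]
          show _ = ψ ((kronPG 1).1)
          simp [kronPG, hψ]
    | succ n ih =>
        refine ⟨ih.2, ?_⟩
        have hr := hrec (n+2) (by omega)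
        have hs2 : n + 2 - 2 = n := by omega
        have hs1 : n + 2 - 1 = n + 1 := by omega
        rw [hs2, hs1] at hr
        have hX : algebraMap (MvPolynomial (Fin 2) ℚ) K ((X 0) ^ (n+2) * (X 1) ^ (n+1))
            = ψ ((X 0) ^ (n+2) * (X 1) ^ (n+1)) := by
          simp [hψ]
        have hq := kronPG_quad n
        have hne : ψ ((kronPG n).1) ≠ 0 := by
          intro h
          have hz : (kronPG n).1 = 0 := ψinj (by simpa using h)
          have hc := (kronPG_const n).1
          rw [hz] at hc
          simp at hc
        have heq : F (n+2) * ψ ((kronPG n).1) = ψ ((kronPG (n+2)).1) * ψ ((kronPG n).1) := by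
          rw [← map_mul, hq, map_add, map_pow, ← ih.2, ← hX, ← ih.1]
          exact hr
        exact mul_right_cancel₀ hne heq
  intro k
  exact ⟨(kronPG k).1, (kronPG_nonneg k).1, ((key k).1).symm⟩
end

section
/- For every k ≥ 1, the polynomial F_k defined by the Kronecker recurrence satisfies: every monomial y_0^a * y_1^b appearing with nonzero coefficient in F_k, other than the constant term 1, has a > b. -/
/-!
Give `y₀` weight `1` and `y₁` weight `-1`. We show by induction that every `F_k` is `1` plus
terms of positive weight. This property is stable under products and under adding a monomial of
positive weight (`y₀^k y₁^(k-1)` has weight `1`). It also survives exact division: if `q` and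
`p q` have it, then the coefficients of `p` of minimal weight reappear unchanged in `p q`, which
forces that minimal weight to be `0`, attained only by the constant term.
-/

open MvPolynomial

namespace MvPolynomial

variable {σ R : Type*} [CommSemiring R] (w : (σ →₀ ℕ) →+ ℤ)

structure IsOneAddPosWeight (p : MvPolynomial σ R) : Prop where
  constantCoeff_eq : constantCoeff p = 1
  weight_pos : ∀ m ∈ p.support, m ≠ 0 → 0 < w m

namespace IsOneAddPosWeight

variable {w} {p q : MvPolynomial σ R}

lemma weight_nonneg (hp : IsOneAddPosWeight w p) {m : σ →₀ ℕ} (hm : m ∈ p.support) :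
    0 ≤ w m := by
  rcases eq_or_ne m 0 with rfl | hm0
  · rw [map_zero]
  · exact (hp.weight_pos m hm hm0).le

lemma one : IsOneAddPosWeight w (1 : MvPolynomial σ R) where
  constantCoeff_eq := map_one _
  weight_pos m hm hm0 := by
    classical
    rw [mem_support_iff, coeff_one, if_neg (Ne.symm hm0)] at hm
    exact absurd rfl hm

lemma mul (hp : IsOneAddPosWeight w p) (hq : IsOneAddPosWeight w q) :
    IsOneAddPosWeight w (p * q) where
  constantCoeff_eq := by rw [map_mul, hp.constantCoeff_eq, hq.constantCoeff_eq, one_mul]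
  weight_pos m hm hm0 := by
    classical
    obtain ⟨a, ha, b, hb, rfl⟩ := Finset.mem_add.1 (support_mul p q hm)
    rw [map_add]
    rcases eq_or_ne a 0 with rfl | ha0
    · rw [zero_add] at hm0
      linarith [hp.weight_nonneg ha, hq.weight_pos b hb hm0]
    · linarith [hp.weight_pos a ha ha0, hq.weight_nonneg hb]

lemma monomial_add (hp : IsOneAddPosWeight w p) {m : σ →₀ ℕ} (hm : 0 < w m) (c : R) :
    IsOneAddPosWeight w (monomial m c + p) where
  constantCoeff_eq := by
    classical
    have hm0 : m ≠ 0 := by rintro rfl; simp at hm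
    rw [map_add, constantCoeff_monomial, if_neg hm0, zero_add, hp.constantCoeff_eq]
  weight_pos m' hm' hm'0 := by
    classical
    rcases Finset.mem_union.1 (support_add hm') with h | h
    · rwa [Finset.mem_singleton.1 (support_monomial_subset h)]
    · exact hp.weight_pos m' h hm'0

lemma coeff_mul_eq_of_forall_weight_le (hq : IsOneAddPosWeight w q) {m : σ →₀ ℕ}
    (hm : ∀ m' ∈ p.support, w m ≤ w m') : coeff m (p * q) = coeff m p := by
  classical
  rw [coeff_mul, Finset.sum_eq_single (m, 0)]
  · change coeff m p * constantCoeff q = _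
    rw [hq.constantCoeff_eq, mul_one]
  · rintro ⟨a, b⟩ hab hne
    rw [Finset.HasAntidiagonal.mem_antidiagonal] at hab
    have hb0 : b ≠ 0 := by rintro rfl; exact hne (by rw [← hab, add_zero])
    by_contra h
    have ha := mem_support_iff.2 (left_ne_zero_of_mul h)
    have hb := mem_support_iff.2 (right_ne_zero_of_mul h)
    have : w m = w a + w b := by rw [← hab, map_add]
    linarith [hm a ha, hq.weight_pos b hb hb0]
  · intro h; exact absurd (Finset.HasAntidiagonal.mem_antidiagonal.2 (add_zero m)) h

lemma of_mul_right (hq : IsOneAddPosWeight w q) (hpq : IsOneAddPosWeight w (p * q)) :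
    IsOneAddPosWeight w p := by
  have mem_support_mul {m} (hm : m ∈ p.support) (hmin : ∀ m' ∈ p.support, w m ≤ w m') :
      m ∈ (p * q).support := by
    rwa [mem_support_iff, hq.coeff_mul_eq_of_forall_weight_le hmin, ← mem_support_iff]
  have nonneg : ∀ m ∈ p.support, 0 ≤ w m := by
    intro m hm
    obtain ⟨m₀, hm₀, hmin⟩ := Finset.exists_min_image p.support w ⟨m, hm⟩
    exact (hpq.weight_nonneg (mem_support_mul hm₀ hmin)).trans (hmin m hm)
  refine ⟨?_, fun m hm hm0 => ?_⟩
  · simpa only [map_mul, hq.constantCoeff_eq, mul_one] using hpq.constantCoeff_eq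
  · by_contra! hle
    have hmin : ∀ m' ∈ p.support, w m ≤ w m' := fun m' hm' => hle.trans (nonneg m' hm')
    exact (hpq.weight_pos m (mem_support_mul hm hmin) hm0).not_ge hle

end IsOneAddPosWeight

end MvPolynomial

lemma weight_single_zero_add_single_one (a b : ℕ) :
    Finsupp.weight ![(1 : ℤ), -1] (Finsupp.single 0 a + Finsupp.single 1 b) = a - b := by
  simp [Finsupp.weight_single, sub_eq_add_neg]

lemma isOneAddPosWeight_of_kronecker_recurrence (F : ℕ → MvPolynomial (Fin 2) ℤ)
    (h0 : F 0 = 1) (h1 : F 1 = X 0 + 1)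
    (hrec : ∀ k, 2 ≤ k → F k * F (k - 2) = X 0 ^ k * X 1 ^ (k - 1) + F (k - 1) ^ 2) (k : ℕ) :
    IsOneAddPosWeight (Finsupp.weight ![(1 : ℤ), -1]) (F k) := by
  induction k using Nat.twoStepInduction with
  | zero => rw [h0]; exact .one
  | one =>
    rw [h1, X]
    exact IsOneAddPosWeight.one.monomial_add (by simp [Finsupp.weight_single]) 1
  | more n hn hn1 =>
    have hprod : F (n + 2) * F n
        = monomial (Finsupp.single 0 (n + 2) + Finsupp.single 1 (n + 1)) 1 + F (n + 1) ^ 2 := by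
      have := hrec (n + 2) (by omega)
      rwa [X_pow_eq_monomial, X_pow_eq_monomial, monomial_mul, mul_one] at this
    refine IsOneAddPosWeight.of_mul_right hn ?_
    rw [hprod, sq]
    exact (hn1.mul hn1).monomial_add (by rw [weight_single_zero_add_single_one]; omega) 1

/-- Every non-constant monomial `y₀^a y₁^b` appearing in the Kronecker F-polynomial `F_k`
(`k ≥ 1`) satisfies `a > b`. -/
theorem kronecker_F_monomials_white_exceeds_black
    (F : ℕ → MvPolynomial (Fin 2) ℤ)
    (h0 : F 0 = 1)
    (h1 : F 1 = X 0 + 1)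
    (hrec : ∀ k, 2 ≤ k → F k * F (k - 2) = X 0 ^ k * X 1 ^ (k - 1) + F (k - 1) ^ 2) :
    ∀ k, 1 ≤ k → ∀ a b : ℕ,
      (F k).coeff (Finsupp.single 0 a + Finsupp.single 1 b) ≠ 0 →
      ¬(a = 0 ∧ b = 0) → a > b := by
  intro k _ a b hcoeff hab
  have hne : Finsupp.single (0 : Fin 2) a + Finsupp.single 1 b ≠ 0 := by
    intro h
    exact hab ⟨by simpa using congr($h 0), by simpa using congr($h 1)⟩
  have := (isOneAddPosWeight_of_kronecker_recurrence F h0 h1 hrec k).weight_pos _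
    (mem_support_iff.2 hcoeff) hne
  rw [weight_single_zero_add_single_one] at this
  omega
end

section
/- In any partition of the row pyramid R_k (a stable configuration of stone removals), the number of removed black stones is strictly less than the number of removed white stones, unless no stones are removed at all. -/
/-- In any nontrivial partition of the row pyramid `R_k` (removed white stones
`S_w ⊆ {1,…,k}`, removed black stones `S_b ⊆ {1,…,k-1}`, where a black stone `i` may be
removed only if white stones `i` and `i+1` are removed), strictly fewer black stones than
white stones are removed. -/
theorem row_partition_black_lt_white (k : ℕ) (Sw Sb : Finset ℕ)
    (hw : Sw ⊆ Finset.Icc 1 k) (hb : Sb ⊆ Finset.Icc 1 (k - 1))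
    (hstable : ∀ i ∈ Sb, i ∈ Sw ∧ i + 1 ∈ Sw)
    (hnontrivial : Sw.Nonempty ∨ Sb.Nonempty) :
    Sb.card < Sw.card := by
  have hne : Sw.Nonempty := by
    rcases hnontrivial with h | ⟨i, hi⟩
    · exact h
    · exact ⟨i, (hstable i hi).1⟩
  have hsub : Sb ⊆ Sw.erase (Sw.max' hne) := by
    intro i hi
    obtain ⟨h1, h2⟩ := hstable i hi
    refine Finset.mem_erase.mpr ⟨?_, h1⟩
    intro heq
    have := Finset.le_max' Sw (i + 1) h2
    omega
  calc Sb.card ≤ (Sw.erase (Sw.max' hne)).card := Finset.card_le_card hsub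
    _ < Sw.card := Finset.card_erase_lt_of_mem (Sw.max'_mem hne)
end

section
/- Fix a ≥ 1 and let m̃ = y_0^a y_1^{a-1}. Then for all odd k ≥ a, the coefficient of the monomial y_0^{k - a + 1} y_1^{k - a} in the Kronecker F-polynomial F_k equals a; and for odd k < a this coefficient is 0. -/
open MvPolynomial

noncomputable def Gk : ℕ → MvPolynomial (Fin 2) ℤ
  | 0 => 1
  | 1 => X 0 + 1
  | (k+2) => (1 + X 0 + X 0 * X 1) * Gk (k+1) - X 0 * X 1 * Gk k

lemma Gk_rec (k : ℕ) :
    Gk (k+2) * Gk k = X 0 ^ (k+2) * X 1 ^ (k+1) + Gk (k+1) ^ 2 := by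
  induction k with
  | zero => simp only [Gk]; ring
  | succ n ih =>
      have h3 : Gk (n+3) = (1 + X 0 + X 0 * X 1) * Gk (n+2) - X 0 * X 1 * Gk (n+1) := rfl
      have h2 : Gk (n+2) = (1 + X 0 + X 0 * X 1) * Gk (n+1) - X 0 * X 1 * Gk n := rfl
      linear_combination Gk (n+1) * h3 - Gk (n+2) * h2 + (X 0 * X 1) * ih

lemma Gk_const : ∀ k, constantCoeff (Gk k) = 1
  | 0 => by simp [Gk]
  | 1 => by simp [Gk]
  | (k+2) => by
      simp [Gk, map_sub, map_add, map_mul, Gk_const (k+1), Gk_const k]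

lemma Gk_ne (k : ℕ) : Gk k ≠ 0 := fun h => by
  have := Gk_const k
  rw [h, map_zero] at this
  exact zero_ne_one this

lemma F_eq_Gk (F : ℕ → MvPolynomial (Fin 2) ℤ)
    (h0 : F 0 = 1) (h1 : F 1 = X 0 + 1)
    (hrec : ∀ k, 2 ≤ k → F k * F (k - 2) = X 0 ^ k * X 1 ^ (k - 1) + F (k - 1) ^ 2) :
    ∀ k, F k = Gk k := by
  intro k
  induction k using Nat.strong_induction_on with
  | _ k ih =>
    match k with
    | 0 => simpa [Gk] using h0
    | 1 => simpa [Gk] using h1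
    | (k+2) =>
      have h := hrec (k+2) (by omega)
      simp only [show k+2-1 = k+1 from rfl, show k+2-2 = k from rfl] at h
      rw [ih (k+1) (by omega), ih k (by omega)] at h
      have := Gk_rec k
      have hmul : F (k+2) * Gk k = Gk (k+2) * Gk k := by
        rw [h, this]
      exact mul_right_cancel₀ (Gk_ne k) hmul

/-- the coefficient of `y0^p y1^q` in `Gk k`. -/
noncomputable def ck (k p q : ℕ) : ℤ :=
  (Gk k).coeff (Finsupp.single 0 p + Finsupp.single 1 q)

-- monomial helpers
lemma mono_succ0 (p q : ℕ) :
    (Finsupp.single (0:Fin 2) (p+1) + Finsupp.single 1 q)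
      = Finsupp.single 0 1 + (Finsupp.single 0 p + Finsupp.single 1 q) := by
  rw [show p + 1 = 1 + p by omega, Finsupp.single_add]; abel

lemma mono_succ1 (p q : ℕ) :
    (Finsupp.single (0:Fin 2) p + Finsupp.single 1 (q+1))
      = Finsupp.single 1 1 + (Finsupp.single 0 p + Finsupp.single 1 q) := by
  rw [show q + 1 = 1 + q by omega, Finsupp.single_add]; abel

lemma coeff_X0_mul (f : MvPolynomial (Fin 2) ℤ) (p q : ℕ) :
    (X 0 * f).coeff (Finsupp.single 0 (p+1) + Finsupp.single 1 q)
      = f.coeff (Finsupp.single 0 p + Finsupp.single 1 q) := by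
  rw [mono_succ0]; exact coeff_X_mul _ _ _

lemma coeff_X1_mul (f : MvPolynomial (Fin 2) ℤ) (p q : ℕ) :
    (X 1 * f).coeff (Finsupp.single 0 p + Finsupp.single 1 (q+1))
      = f.coeff (Finsupp.single 0 p + Finsupp.single 1 q) := by
  rw [mono_succ1]; exact coeff_X_mul _ _ _

lemma coeff_X0_mul_zero (f : MvPolynomial (Fin 2) ℤ) (q : ℕ) :
    (X 0 * f).coeff (Finsupp.single 0 0 + Finsupp.single 1 q) = 0 := by
  rw [coeff_X_mul']
  have : (0:Fin 2) ∉ (Finsupp.single (0:Fin 2) 0 + Finsupp.single 1 q).support := by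
    simp [Finsupp.mem_support_iff, Finsupp.single_apply]
  rw [if_neg this]

lemma coeff_X1_mul_zero (f : MvPolynomial (Fin 2) ℤ) (p : ℕ) :
    (X 1 * f).coeff (Finsupp.single 0 p + Finsupp.single 1 0) = 0 := by
  rw [coeff_X_mul']
  have : (1:Fin 2) ∉ (Finsupp.single (0:Fin 2) p + Finsupp.single 1 0).support := by
    simp [Finsupp.mem_support_iff, Finsupp.single_apply]
  rw [if_neg this]

lemma Gk_expand (k : ℕ) :
    Gk (k+2) = Gk (k+1) + X 0 * Gk (k+1) + X 0 * (X 1 * Gk (k+1)) - X 0 * (X 1 * Gk k) := by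
  show (1 + X 0 + X 0 * X 1) * Gk (k+1) - X 0 * X 1 * Gk k = _
  ring

lemma ck_rec (k p q : ℕ) :
    ck (k+2) (p+1) (q+1)
      = ck (k+1) (p+1) (q+1) + ck (k+1) p (q+1) + ck (k+1) p q - ck k p q := by
  unfold ck
  rw [Gk_expand, coeff_sub, coeff_add, coeff_add, coeff_X0_mul, coeff_X0_mul,
    coeff_X1_mul, coeff_X0_mul, coeff_X1_mul]

lemma ck_rec0 (k p : ℕ) :
    ck (k+2) (p+1) 0 = ck (k+1) (p+1) 0 + ck (k+1) p 0 := by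
  unfold ck
  rw [Gk_expand, coeff_sub, coeff_add, coeff_add, coeff_X0_mul, coeff_X0_mul,
    coeff_X1_mul_zero, coeff_X0_mul, coeff_X1_mul_zero]
  ring

lemma ck_rec0' (k q : ℕ) :
    ck (k+2) 0 q = ck (k+1) 0 q := by
  unfold ck
  rw [Gk_expand, coeff_sub, coeff_add, coeff_add, coeff_X0_mul_zero,
    coeff_X0_mul_zero, coeff_X0_mul_zero]
  ring

lemma ck_00 : ∀ k, ck k 0 0 = 1 := by
  intro k
  unfold ck
  have h : (Finsupp.single (0:Fin 2) 0 + Finsupp.single 1 0) = 0 := by simp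
  rw [h]
  simpa [MvPolynomial.constantCoeff_eq] using Gk_const k

lemma mono_ne_zero (p q : ℕ) (h : p ≠ 0 ∨ q ≠ 0) :
    (Finsupp.single (0:Fin 2) p + Finsupp.single 1 q) ≠ 0 := by
  intro hc
  rcases h with h | h
  · exact h (by simpa using congrFun (congrArg (↑·) hc) 0)
  · exact h (by simpa [Finsupp.single_apply] using congrFun (congrArg (↑·) hc) 1)

lemma mono_ne_X0 (p q : ℕ) (h : q ≠ 0) :
    (Finsupp.single (0:Fin 2) p + Finsupp.single 1 q) ≠ Finsupp.single 0 1 := by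
  intro hc
  have := congrFun (congrArg (↑·) hc) 1
  simp [Finsupp.single_apply] at this
  exact h this

lemma ck0 (p q : ℕ) (h : p ≠ 0 ∨ q ≠ 0) : ck 0 p q = 0 := by
  unfold ck
  show (1 : MvPolynomial (Fin 2) ℤ).coeff _ = 0
  rw [coeff_one, if_neg]
  intro hc
  exact mono_ne_zero p q h hc.symm

lemma ck1 (p q : ℕ) (h : (p ≠ 0 ∨ q ≠ 0) ∧ ¬(p = 1 ∧ q = 0)) : ck 1 p q = 0 := by
  unfold ck
  show (X 0 + 1 : MvPolynomial (Fin 2) ℤ).coeff _ = 0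
  rw [coeff_add, coeff_one, coeff_X', if_neg, if_neg, add_zero]
  · intro hc; exact mono_ne_zero p q h.1 hc.symm
  · intro hc
    have h0 := congrFun (congrArg (↑·) hc.symm) 0
    have h1 := congrFun (congrArg (↑·) hc.symm) 1
    simp [Finsupp.single_apply] at h0 h1
    exact h.2 ⟨h0, h1⟩

lemma ck_below : ∀ k p q, p ≤ q → 1 ≤ q → ck k p q = 0
  | 0, p, q, _, hq => ck0 p q (Or.inr (by omega))
  | 1, p, q, _, hq => ck1 p q ⟨Or.inr (by omega), by omega⟩
  | (k+2), p, q, hpq, hq => by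
      obtain ⟨q', rfl⟩ : ∃ q', q = q' + 1 := ⟨q - 1, by omega⟩
      cases p with
      | zero =>
          rw [ck_rec0']
          exact ck_below (k+1) 0 (q'+1) (by omega) (by omega)
      | succ p' =>
          rw [ck_rec]
          rw [ck_below (k+1) (p'+1) (q'+1) hpq (by omega),
            ck_below (k+1) p' (q'+1) (by omega) (by omega)]
          rcases Nat.eq_zero_or_pos q' with h | h
          · subst h
            have hp' : p' = 0 := by omega
            subst hp'
            rw [ck_00, ck_00]; ring
          · rw [ck_below (k+1) p' q' (by omega) h, ck_below k p' q' (by omega) h]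
            ring

lemma ck_diag : ∀ k q, ck k (q+1) q = if q < k then ((k - q : ℕ) : ℤ) else 0
  | 0, q => by rw [ck0 (q+1) q (Or.inl (by omega))]; simp
  | 1, q => by
      rcases Nat.eq_zero_or_pos q with h | h
      · subst h
        have : ck 1 1 0 = 1 := by
          unfold ck
          show (X 0 + 1 : MvPolynomial (Fin 2) ℤ).coeff _ = 1
          rw [coeff_add, coeff_one, coeff_X', if_pos, if_neg, add_zero]
          · exact fun hc => mono_ne_zero 1 0 (Or.inl one_ne_zero) hc.symm
          · ext i
            fin_cases i <;> simp [Finsupp.single_apply]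
        rw [this]; simp
      · rw [ck1 (q+1) q ⟨Or.inl (by omega), by omega⟩, if_neg (by omega)]
  | (k+2), q => by
      cases q with
      | zero =>
          rw [ck_rec0, ck_00, ck_diag (k+1) 0]
          rw [if_pos (by omega), if_pos (by omega)]
          push_cast
          omega
      | succ q' =>
          rw [ck_rec, ck_below (k+1) (q'+1) (q'+1) le_rfl (by omega),
            ck_diag (k+1) (q'+1), ck_diag (k+1) q', ck_diag k q']
          split_ifs <;> omega

/-- For `a ≥ 1`, the coefficient of `y₀^{k-a+1} y₁^{k-a}` in the Kronecker F-polynomial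
`F_k` equals `a` for all odd `k ≥ a`; and for odd `k < a` this coefficient (of the
monomial with integer exponent vector `(k-a+1, k-a)`) is `0`. -/
theorem kronecker_stable_coefficient
    (F : ℕ → MvPolynomial (Fin 2) ℤ)
    (h0 : F 0 = 1)
    (h1 : F 1 = X 0 + 1)
    (hrec : ∀ k, 2 ≤ k → F k * F (k - 2) = X 0 ^ k * X 1 ^ (k - 1) + F (k - 1) ^ 2)
    (a : ℕ) (ha : 1 ≤ a) :
    (∀ k, Odd k → a ≤ k →
      (F k).coeff (Finsupp.single 0 (k - a + 1) + Finsupp.single 1 (k - a)) = (a : ℤ)) ∧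
    (∀ k, Odd k → k < a → ∀ e0 e1 : ℕ,
      (e0 : ℤ) = (k : ℤ) - a + 1 → (e1 : ℤ) = (k : ℤ) - a →
      (F k).coeff (Finsupp.single 0 e0 + Finsupp.single 1 e1) = 0) := by
  constructor
  · intro k _ hak
    rw [F_eq_Gk F h0 h1 hrec k]
    have h := ck_diag k (k - a)
    rw [if_pos (by omega)] at h
    have : ck k (k - a + 1) (k - a) = (a : ℤ) := by rw [h]; omega
    exact this
  · intro k _ hka e0 e1 he0 he1
    exfalso
    omega
end

section
/- The transformed Kronecker F-polynomials converge coefficientwise: for every monomial m in y_0, y_1, the coefficient of m in the C_k-transformed F-polynomial F̃_k is eventually constant in k (over odd k), and the limiting formal power series equals 1 + ∑_{i≥1} i · y_0^i y_1^{i-1}. -/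
open MvPolynomial

noncomputable abbrev e (p q : ℕ) : Fin 2 →₀ ℕ := Finsupp.single 0 p + Finsupp.single 1 q

lemma e_apply0 (p q : ℕ) : e p q 0 = p := by simp
lemma e_apply1 (p q : ℕ) : e p q 1 = q := by simp
lemma e_zero : e 0 0 = 0 := by simp
lemma eq_e_iff (m : Fin 2 →₀ ℕ) (p q : ℕ) : m = e p q ↔ m 0 = p ∧ m 1 = q := by
  constructor
  · rintro rfl; simp
  · rintro ⟨hp, hq⟩; ext i; fin_cases i <;> simp [hp, hq]
lemma single_eq_e : Finsupp.single (0 : Fin 2) 1 = e 1 0 := by simp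
lemma e_le_iff (p q : ℕ) (m : Fin 2 →₀ ℕ) : e p q ≤ m ↔ p ≤ m 0 ∧ q ≤ m 1 := by
  rw [Finsupp.le_def]
  constructor
  · intro h; exact ⟨by simpa using h 0, by simpa using h 1⟩
  · rintro ⟨h1, h2⟩ i; fin_cases i <;> simpa
lemma sub_apply0 (m : Fin 2 →₀ ℕ) (p q : ℕ) : (m - e p q) 0 = m 0 - p := by
  rw [Finsupp.tsub_apply, e_apply0]
lemma sub_apply1 (m : Fin 2 →₀ ℕ) (p q : ℕ) : (m - e p q) 1 = m 1 - q := by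
  rw [Finsupp.tsub_apply, e_apply1]
lemma e_sub (p q p' q' : ℕ) : e p q - e p' q' = e (p - p') (q - q') := by
  ext i; fin_cases i <;> simp [Finsupp.tsub_apply]
lemma X0_eq : (X 0 : MvPolynomial (Fin 2) ℤ) = monomial (e 1 0) 1 := by
  rw [← single_eq_e]; rfl
lemma X01_eq : (X 0 * X 1 : MvPolynomial (Fin 2) ℤ) = monomial (e 1 1) 1 := by
  rw [show (X 0 : MvPolynomial (Fin 2) ℤ) = monomial (Finsupp.single 0 1) 1 from rfl, show (X 1 : MvPolynomial (Fin 2) ℤ) = monomial (Finsupp.single 1 1) 1 from rfl, monomial_mul]; simp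

section
variable (F : ℕ → MvPolynomial (Fin 2) ℤ)
  (h0 : F 0 = 1)
  (h1 : F 1 = X 0 + 1)
  (hrec : ∀ k, 2 ≤ k → F k * F (k - 2) = X 0 ^ k * X 1 ^ (k - 1) + F (k - 1) ^ 2)

include h0 h1 hrec

lemma F_eval_pos : ∀ k, 0 < eval (fun _ => (1:ℤ)) (F k) := by
  intro k
  induction k using Nat.twoStepInduction with
  | zero => simp [h0]
  | one => simp [h1]
  | more k ih1 ih2 =>
    have h := hrec (k + 2) (by omega)
    simp only [show k + 2 - 2 = k from by omega, show k + 2 - 1 = k + 1 from by omega] at h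
    have := congrArg (eval (fun _ => (1:ℤ))) h
    simp only [eval_mul, eval_add, eval_pow, eval_X] at this
    simp only [one_pow, one_mul] at this
    nlinarith [sq_nonneg ((eval fun _ => (1:ℤ)) (F (k+1)))]

lemma F_ne_zero : ∀ k, F k ≠ 0 := by
  intro k h
  have := F_eval_pos F h0 h1 hrec k
  rw [h] at this
  simp at this

lemma F_lin : ∀ k, F (k + 2) = (X 0 * X 1 + X 0 + 1) * F (k + 1) - X 0 * X 1 * F k := by
  intro k
  induction k with
  | zero =>
    have h2 := hrec 2 (by omega)
    simp only [show (2:ℕ) - 2 = 0 from rfl, show (2:ℕ) - 1 = 1 from rfl, h0, h1, mul_one] at h2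
    rw [h2, h0, h1]; ring
  | succ k ih =>
    have hA := hrec (k + 3) (by omega)
    have hB := hrec (k + 2) (by omega)
    simp only [show k + 3 - 2 = k + 1 from by omega, show k + 3 - 1 = k + 2 from by omega,
      show k + 2 - 2 = k from by omega, show k + 2 - 1 = k + 1 from by omega] at hA hB
    have hc := F_ne_zero F h0 h1 hrec (k + 1)
    apply mul_right_cancel₀ hc
    linear_combination hA - (X 0 * X 1) * hB + (F (k + 2)) * ih

end

section
variable (F : ℕ → MvPolynomial (Fin 2) ℤ)
  (h0 : F 0 = 1)
  (h1 : F 1 = X 0 + 1)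
  (hrec : ∀ k, 2 ≤ k → F k * F (k - 2) = X 0 ^ k * X 1 ^ (k - 1) + F (k - 1) ^ 2)

include h0 h1 hrec

lemma coeff_step (k : ℕ) (m : Fin 2 →₀ ℕ) :
    coeff m (F (k + 2)) =
      (if e 1 1 ≤ m then coeff (m - e 1 1) (F (k + 1)) else 0) +
      (if e 1 0 ≤ m then coeff (m - e 1 0) (F (k + 1)) else 0) +
      coeff m (F (k + 1)) -
      (if e 1 1 ≤ m then coeff (m - e 1 1) (F k) else 0) := by
  have hl := F_lin F h0 h1 hrec k
  have : F (k + 2) = F (k + 1) * monomial (e 1 1) 1 + F (k + 1) * monomial (e 1 0) 1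
      + F (k + 1) - F k * monomial (e 1 1) 1 := by
    rw [hl, ← X01_eq, ← X0_eq]; ring
  rw [this, coeff_sub, coeff_add, coeff_add, coeff_mul_monomial', coeff_mul_monomial',
    coeff_mul_monomial']
  split_ifs <;> ring

def KInv (F : ℕ → MvPolynomial (Fin 2) ℤ) (k : ℕ) : Prop :=
  coeff 0 (F k) = 1 ∧
  (∀ m : Fin 2 →₀ ℕ, m 0 < m 1 → coeff m (F k) = 0) ∧
  (∀ m : Fin 2 →₀ ℕ, 2 * k < m 0 + m 1 → coeff m (F k) = 0) ∧
  (∀ j : ℕ, coeff (e (j+1) j) (F k) = if j < k then ((k:ℤ) - (j:ℤ)) else 0) ∧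
  (∀ j : ℕ, 1 ≤ j → coeff (e j j) (F k) = 0)

omit h0 h1 hrec in
lemma coeff_F1' (m : Fin 2 →₀ ℕ) :
    coeff m (X 0 + 1 : MvPolynomial (Fin 2) ℤ)
      = if m 0 = 1 ∧ m 1 = 0 then 1 else if m 0 = 0 ∧ m 1 = 0 then 1 else 0 := by
  rw [coeff_add, coeff_X', coeff_one]
  have hs : (Finsupp.single (0:Fin 2) 1 = m) ↔ (m 0 = 1 ∧ m 1 = 0) := by
    rw [single_eq_e, eq_comm, eq_e_iff]
  have hz : ((0 : Fin 2 →₀ ℕ) = m) ↔ (m 0 = 0 ∧ m 1 = 0) := by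
    rw [← e_zero, eq_comm, eq_e_iff]
  by_cases hA : m 0 = 1 ∧ m 1 = 0 <;> by_cases hB : m 0 = 0 ∧ m 1 = 0 <;>
    simp [hs, hz, hA, hB] <;> omega

omit h0 h1 hrec in
lemma coeff_F0' (m : Fin 2 →₀ ℕ) :
    coeff m (1 : MvPolynomial (Fin 2) ℤ) = if m 0 = 0 ∧ m 1 = 0 then 1 else 0 := by
  rw [coeff_one]
  have hz : ((0 : Fin 2 →₀ ℕ) = m) ↔ (m 0 = 0 ∧ m 1 = 0) := by
    rw [← e_zero, eq_comm, eq_e_iff]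
  by_cases hB : m 0 = 0 ∧ m 1 = 0 <;> simp [hz, hB]

lemma inv_all : ∀ k, KInv F k := by
  intro k
  induction k using Nat.twoStepInduction with
  | zero =>
    rw [KInv, h0]
    refine ⟨by rw [coeff_F0']; simp, ?_, ?_, ?_, ?_⟩
    · intro m hm; rw [coeff_F0']; split_ifs <;> omega
    · intro m hm; rw [coeff_F0']; split_ifs <;> omega
    · intro j; rw [coeff_F0', e_apply0, e_apply1]
      split_ifs <;> simp_all
    · intro j hj; rw [coeff_F0', e_apply0, e_apply1]
      split_ifs <;> simp_all
  | one =>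
    rw [KInv, h1]
    refine ⟨by rw [coeff_F1']; simp, ?_, ?_, ?_, ?_⟩
    · intro m hm; rw [coeff_F1']; split_ifs <;> omega
    · intro m hm; rw [coeff_F1']; split_ifs <;> omega
    · intro j; rw [coeff_F1', e_apply0, e_apply1]
      split_ifs <;> first | omega | (push_cast; omega) | (exfalso; omega)
    · intro j hj; rw [coeff_F1', e_apply0, e_apply1]; split_ifs <;> omega
  | more k ih1 ih2 =>
    obtain ⟨c1, s1, d1, l1, g1⟩ := ih1
    obtain ⟨c2, s2, d2, l2, g2⟩ := ih2
    refine ⟨?_, ?_, ?_, ?_, ?_⟩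
    · rw [coeff_step F h0 h1 hrec]
      rw [if_neg (by rw [e_le_iff]; simp), if_neg (by rw [e_le_iff]; simp),
        if_neg (by rw [e_le_iff]; simp)]
      simpa using c2
    · intro m hm
      rw [coeff_step F h0 h1 hrec]
      split_ifs with hu hv hv
      · rw [s2 _ (by rw [sub_apply0, sub_apply1]; rw [e_le_iff] at hu; omega),
          s2 _ (by rw [sub_apply0, sub_apply1]; rw [e_le_iff] at hv; omega),
          s2 _ hm, s1 _ (by rw [sub_apply0, sub_apply1]; rw [e_le_iff] at hu; omega)]
        ring
      · rw [s2 _ (by rw [sub_apply0, sub_apply1]; rw [e_le_iff] at hu; omega),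
          s2 _ hm, s1 _ (by rw [sub_apply0, sub_apply1]; rw [e_le_iff] at hu; omega)]
        ring
      · rw [s2 _ (by rw [sub_apply0, sub_apply1]; rw [e_le_iff] at hv; omega), s2 _ hm]
        ring
      · rw [s2 _ hm]; ring
    · intro m hm
      rw [coeff_step F h0 h1 hrec]
      split_ifs with hu hv hv
      · rw [d2 _ (by rw [sub_apply0, sub_apply1]; rw [e_le_iff] at hu; omega),
          d2 _ (by rw [sub_apply0, sub_apply1]; rw [e_le_iff] at hv; omega),
          d2 _ (by omega), d1 _ (by rw [sub_apply0, sub_apply1]; rw [e_le_iff] at hu; omega)]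
        ring
      · rw [d2 _ (by rw [sub_apply0, sub_apply1]; rw [e_le_iff] at hu; omega),
          d2 _ (by omega), d1 _ (by rw [sub_apply0, sub_apply1]; rw [e_le_iff] at hu; omega)]
        ring
      · rw [d2 _ (by rw [sub_apply0, sub_apply1]; rw [e_le_iff] at hv; omega), d2 _ (by omega)]
        ring
      · rw [d2 _ (by omega)]; ring
    · intro j
      rw [coeff_step F h0 h1 hrec]
      rcases Nat.eq_zero_or_pos j with hj | hj
      · subst hj
        have hne : ¬ e 1 1 ≤ e (0+1) 0 := by rw [e_le_iff, e_apply0, e_apply1]; omega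
        have hpos : e 1 0 ≤ e (0+1) 0 := le_refl _
        rw [if_neg hne, if_neg hne, if_pos hpos, e_sub]
        norm_num [e_zero, c2]
        have hl20 := l2 0
        norm_num at hl20
        rw [hl20]
        first | omega | (push_cast; omega) | (split_ifs <;> push_cast <;> omega)
      · obtain ⟨i, rfl⟩ : ∃ i, j = i + 1 := ⟨j - 1, by omega⟩
        have hu : e 1 1 ≤ e (i+1+1) (i+1) := by rw [e_le_iff, e_apply0, e_apply1]; omega
        have hv : e 1 0 ≤ e (i+1+1) (i+1) := by rw [e_le_iff, e_apply0, e_apply1]; omega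
        rw [if_pos hu, if_pos hu, if_pos hv, e_sub, e_sub]
        simp only [Nat.add_sub_cancel, Nat.sub_zero]
        rw [l2 i, l2 (i + 1), l1 i, g2 (i + 1) (by omega)]
        split_ifs <;> first | omega | (push_cast; omega) | (exfalso; omega)
    · intro j hj
      rw [coeff_step F h0 h1 hrec]
      have hu : e 1 1 ≤ e j j := by rw [e_le_iff, e_apply0, e_apply1]; omega
      have hv : e 1 0 ≤ e j j := by rw [e_le_iff, e_apply0, e_apply1]; omega
      rw [if_pos hu, if_pos hu, if_pos hv, e_sub, e_sub]
      simp only [Nat.sub_zero]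
      rcases Nat.eq_or_lt_of_le hj with hj1 | hj2
      · rw [← hj1]
        simp only [Nat.sub_self]
        rw [show e 0 0 = 0 from e_zero, c2, c1, s2 _ (by rw [e_apply0, e_apply1]; omega),
          g2 1 (by omega)]
        ring
      · rw [g2 (j - 1) (by omega), g2 j hj, g1 (j - 1) (by omega),
          s2 _ (by rw [e_apply0, e_apply1]; omega)]
        ring

end

lemma sum_ite_coeff (p : MvPolynomial (Fin 2) ℤ) (t : Fin 2 →₀ ℕ) :
    (∑ m ∈ p.support, if m = t then coeff m p else 0) = coeff t p := by
  rw [Finset.sum_ite_eq' p.support t (fun m => coeff m p)]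
  split_ifs with h
  · rfl
  · exact (notMem_support_iff.mp h).symm

open scoped Classical in
/-- Coefficientwise convergence of the transformed Kronecker F-polynomials: for each
monomial `y₀^a y₁^b`, the coefficient in the `C_k`-transform of `F_k` (obtained by sending
each monomial `y₀^α y₁^β` of `F_k` to `y₀^{k(α-β)-β} y₁^{k(α-β)-α}`) is eventually
constant over odd `k`, with limit the coefficient of the formal power series
`1 + ∑_{i≥1} i · y₀^i y₁^{i-1}`. -/
theorem kronecker_transformed_F_converges
    (F : ℕ → MvPolynomial (Fin 2) ℤ)
    (h0 : F 0 = 1)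
    (h1 : F 1 = X 0 + 1)
    (hrec : ∀ k, 2 ≤ k → F k * F (k - 2) = X 0 ^ k * X 1 ^ (k - 1) + F (k - 1) ^ 2) :
    ∀ a b : ℕ, ∃ K, ∀ k, K ≤ k → Odd k →
      (∑ m ∈ (F k).support,
        if ((k : ℤ) * ((m 0 : ℤ) - (m 1 : ℤ)) - (m 1 : ℤ) = (a : ℤ) ∧
            (k : ℤ) * ((m 0 : ℤ) - (m 1 : ℤ)) - (m 0 : ℤ) = (b : ℤ))
          then (F k).coeff m else 0)
        = (if a = 0 ∧ b = 0 then 1 else if a = b + 1 then (a : ℤ) else 0) := by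
  intro a b
  refine ⟨a + b + 1, ?_⟩
  intro k hk _
  obtain ⟨c1, s1, d1, l1, g1⟩ := inv_all F h0 h1 hrec k
  by_cases hab0 : a = 0 ∧ b = 0
  · obtain ⟨ha, hb⟩ := hab0
    subst ha; subst hb
    rw [if_pos ⟨rfl, rfl⟩]
    have hcongr : ∀ m ∈ (F k).support,
        (if ((k : ℤ) * ((m 0 : ℤ) - (m 1 : ℤ)) - (m 1 : ℤ) = ((0:ℕ) : ℤ) ∧
            (k : ℤ) * ((m 0 : ℤ) - (m 1 : ℤ)) - (m 0 : ℤ) = ((0:ℕ) : ℤ))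
          then (F k).coeff m else 0)
          = if m = (0 : Fin 2 →₀ ℕ) then (F k).coeff m else 0 := by
      intro m _
      refine if_congr ?_ rfl rfl
      constructor
      · rintro ⟨hA, hB⟩
        have hd : ((m 0 : ℤ) - (m 1 : ℤ)) = ((0:ℕ) : ℤ) - ((0:ℕ) : ℤ) := by linarith
        have hz : (k : ℤ) * ((m 0 : ℤ) - (m 1 : ℤ)) = 0 := by
          rw [hd]; ring
        rw [hz] at hA hB
        rw [show (0 : Fin 2 →₀ ℕ) = e 0 0 from e_zero.symm, eq_e_iff]
        constructor <;> omega
      · rintro rfl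
        norm_num
    rw [Finset.sum_congr rfl hcongr, sum_ite_coeff]
    exact c1
  · by_cases hab1 : a = b + 1
    · rw [if_neg hab0, if_pos hab1]
      have hka : a ≤ k := by omega
      have hiff : ∀ m : Fin 2 →₀ ℕ,
          ((k : ℤ) * ((m 0 : ℤ) - (m 1 : ℤ)) - (m 1 : ℤ) = (a : ℤ) ∧
            (k : ℤ) * ((m 0 : ℤ) - (m 1 : ℤ)) - (m 0 : ℤ) = (b : ℤ))
            ↔ m = e (k - a + 1) (k - a) := by
        intro m
        constructor
        · rintro ⟨hA, hB⟩
          have hd : ((m 0 : ℤ) - (m 1 : ℤ)) = (a : ℤ) - (b : ℤ) := by linarith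
          have hz : (k : ℤ) * ((m 0 : ℤ) - (m 1 : ℤ)) = (k : ℤ) := by
            rw [hd, show ((a : ℤ) - (b : ℤ)) = 1 from by omega]; ring
          rw [hz] at hA hB
          rw [eq_e_iff]
          constructor <;> omega
        · rintro rfl
          have h' : ((k - a : ℕ) : ℤ) = (k : ℤ) - (a : ℤ) := by omega
          constructor <;> ((simp only [e_apply0, e_apply1]; push_cast [h']; ring_nf) <;> omega)
      rw [Finset.sum_congr rfl (fun m _ => if_congr (hiff m) rfl rfl), sum_ite_coeff]
      rw [l1 (k - a), if_pos (by omega : k - a < k)]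
      have h' : ((k - a : ℕ) : ℤ) = (k : ℤ) - (a : ℤ) := by omega
      rw [h']; ring
    · rw [if_neg hab0, if_neg hab1]
      apply Finset.sum_eq_zero
      intro m hm
      split_ifs with hC
      · exfalso
        obtain ⟨hA, hB⟩ := hC
        have hd : ((m 0 : ℤ) - (m 1 : ℤ)) = (a : ℤ) - (b : ℤ) := by linarith
        rcases lt_trichotomy a b with h | h | h
        · have hlt : m 0 < m 1 := by omega
          exact (mem_support_iff.mp hm) (s1 m hlt)
        · have ha1 : 1 ≤ a := by omega
          have hz : (k : ℤ) * ((m 0 : ℤ) - (m 1 : ℤ)) = 0 := by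
            rw [hd, show ((a : ℤ) - (b : ℤ)) = 0 from by omega]; ring
          rw [hz] at hA
          omega
        · have ha2 : b + 2 ≤ a := by omega
          have hc2 : 2 * (k : ℤ) ≤ (k : ℤ) * ((a : ℤ) - (b : ℤ)) := by
            have h2 : (2 : ℤ) ≤ (a : ℤ) - (b : ℤ) := by omega
            nlinarith [Int.natCast_nonneg k]
          rw [hd] at hA
          have hkk : ((a : ℤ) + (b : ℤ) + 1) ≤ (k : ℤ) := by exact_mod_cast hk
          have hm0 : (m 0 : ℤ) = (m 1 : ℤ) + ((a : ℤ) - (b : ℤ)) := by linarith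
          have hsum : 2 * k < m 0 + m 1 := by
            have : (2 * k : ℤ) < (m 0 : ℤ) + (m 1 : ℤ) := by linarith
            exact_mod_cast this
          exact (mem_support_iff.mp hm) (d1 m hsum)
      · rfl
end

section
/- In any partition of the Aztec diamond pyramid AD_k, if P is simple (its restriction to each row pyramid in the decomposition is a simple partition) then the number of removed white stones minus the number of removed black stones equals the number of altered rows; and if P is not simple, the difference is strictly greater than the number of altered rows. -/
/-- The rows of the Aztec diamond pyramid `AD_k`: a row is indexed by `(j, p)` where `j`
is its layer (`1 ≤ j ≤ k`) and `p` its position in the layer (`1 ≤ p ≤ j`); the row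
`(j, p)` is a row pyramid of length `k - j + 1`. -/
def ADRows (k : ℕ) : Finset (ℕ × ℕ) :=
  (Finset.Icc 1 k ×ˢ Finset.Icc 1 k).filter (fun r => r.2 ≤ r.1)

/-- The restriction of a partition to a single row of length `ℓ` is simple: the removed
white stones form one (possibly empty) consecutive block, and all forced black stones are
removed. -/
def RowRestrictionSimple (ℓ : ℕ) (Sw Sb : Finset ℕ) : Prop :=
  (∃ i w, 1 ≤ i ∧ Sw = Finset.Ico i (i + w)) ∧
  Sb = (Finset.Icc 1 (ℓ - 1)).filter (fun i => i ∈ Sw ∧ i + 1 ∈ Sw)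

lemma filter_interval (L i w : ℕ) (hi : 1 ≤ i) (hL : i + w - 1 ≤ L) :
    (Finset.Icc 1 (L - 1)).filter
      (fun j => j ∈ Finset.Ico i (i + w) ∧ j + 1 ∈ Finset.Ico i (i + w))
      = Finset.Ico i (i + w - 1) := by
  ext j
  simp only [Finset.mem_filter, Finset.mem_Icc, Finset.mem_Ico]
  omega

lemma row_lower (Sw Sb : Finset ℕ) (hf : ∀ i ∈ Sb, i ∈ Sw ∧ i + 1 ∈ Sw) :
    Sb.card + (if Sw.Nonempty ∨ Sb.Nonempty then 1 else 0) ≤ Sw.card := by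
  split_ifs with h
  · have hSw : Sw.Nonempty := by
      rcases h with h | h
      · exact h
      · obtain ⟨i, hi⟩ := h
        exact ⟨i, (hf i hi).1⟩
    have hsub : Sb ⊆ Sw.filter (fun i => i + 1 ∈ Sw) := fun i hi =>
      Finset.mem_filter.mpr ⟨(hf i hi).1, (hf i hi).2⟩
    have hsplit := Finset.card_filter_add_card_filter_not
      (s := Sw) (p := fun i => i + 1 ∈ Sw)
    have hR : (Sw.filter (fun i => ¬ i + 1 ∈ Sw)).Nonempty := by
      refine ⟨Sw.max' hSw, Finset.mem_filter.mpr ⟨Sw.max'_mem hSw, fun hc => ?_⟩⟩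
      have := Finset.le_max' Sw _ hc
      omega
    have h1 := Finset.card_le_card hsub
    have h2 := Finset.card_pos.mpr hR
    omega
  · have : Sb = ∅ := by
      by_contra hb
      exact h (Or.inr (Finset.nonempty_of_ne_empty hb))
    simp [this]

lemma row_eq (L : ℕ) (Sw Sb : Finset ℕ) (hw : Sw ⊆ Finset.Icc 1 L)
    (hs : RowRestrictionSimple L Sw Sb) :
    Sw.card = Sb.card + (if Sw.Nonempty ∨ Sb.Nonempty then 1 else 0) := by
  obtain ⟨⟨i, w, hi, hSw⟩, hSb⟩ := hs
  rcases Nat.eq_zero_or_pos w with hw0 | hw1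
  · subst hw0
    simp only [Nat.add_zero, Finset.Ico_self] at hSw
    have hb : Sb = ∅ := by
      rw [hSb, hSw]
      simp
    simp [hSw, hb]
  · have hL : i + w - 1 ≤ L := by
      have : i + w - 1 ∈ Sw := by
        rw [hSw, Finset.mem_Ico]; omega
      have := hw this
      rw [Finset.mem_Icc] at this
      omega
    have hSb' : Sb = Finset.Ico i (i + w - 1) := by
      rw [hSb, hSw]; exact filter_interval L i w hi hL
    have hne : Sw.Nonempty := by
      rw [hSw]; refine ⟨i, ?_⟩; rw [Finset.mem_Ico]; omega
    rw [if_pos (Or.inl hne), hSw, hSb', Nat.card_Ico, Nat.card_Ico]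
    omega

lemma row_strict (L : ℕ) (Sw Sb : Finset ℕ) (hw : Sw ⊆ Finset.Icc 1 L)
    (hb : Sb ⊆ Finset.Icc 1 (L - 1)) (hf : ∀ i ∈ Sb, i ∈ Sw ∧ i + 1 ∈ Sw)
    (hns : ¬ RowRestrictionSimple L Sw Sb) :
    Sb.card + 2 ≤ Sw.card := by
  by_cases hI : ∃ i w, 1 ≤ i ∧ Sw = Finset.Ico i (i + w)
  · obtain ⟨i, w, hi, hSw⟩ := hI
    have hSbne : Sb ≠ (Finset.Icc 1 (L - 1)).filter (fun j => j ∈ Sw ∧ j + 1 ∈ Sw) := by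
      intro hc
      exact hns ⟨⟨i, w, hi, hSw⟩, hc⟩
    have hsub : Sb ⊆ (Finset.Icc 1 (L - 1)).filter (fun j => j ∈ Sw ∧ j + 1 ∈ Sw) := by
      intro j hj
      exact Finset.mem_filter.mpr ⟨hb hj, hf j hj⟩
    have hlt : Sb.card < ((Finset.Icc 1 (L - 1)).filter
        (fun j => j ∈ Sw ∧ j + 1 ∈ Sw)).card :=
      Finset.card_lt_card (lt_of_le_of_ne hsub hSbne)
    rcases Nat.eq_zero_or_pos w with hw0 | hw1
    · exfalso
      subst hw0
      simp only [Nat.add_zero, Finset.Ico_self] at hSw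
      apply hSbne
      rw [hSw]
      have h1 : Sb = ∅ := by
        rw [Finset.eq_empty_iff_forall_notMem]
        intro j hj
        have := (hf j hj).1
        rw [hSw] at this
        exact absurd this (Finset.notMem_empty j)
      rw [h1]
      ext j
      simp
    · have hL : i + w - 1 ≤ L := by
        have : i + w - 1 ∈ Sw := by
          rw [hSw, Finset.mem_Ico]; omega
        have := hw this
        rw [Finset.mem_Icc] at this
        omega
      have := filter_interval L i w hi hL
      rw [hSw] at hlt ⊢
      rw [this] at hlt
      rw [Nat.card_Ico] at hlt
      rw [Nat.card_Ico]
      omega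
  · -- Sw is not an interval
    have hSw : Sw.Nonempty := by
      rcases Finset.eq_empty_or_nonempty Sw with h | h
      · exact absurd ⟨1, 0, le_refl 1, by simp [h]⟩ hI
      · exact h
    set M := Sw.max' hSw with hM
    set m := Sw.min' hSw with hm
    have hmM : m ≤ M := Finset.min'_le Sw M (Sw.max'_mem hSw)
    have hm1 : 1 ≤ m := by
      have := hw (Sw.min'_mem hSw)
      rw [Finset.mem_Icc] at this
      exact this.1
    -- there is a gap
    have hgap : ∃ j, m ≤ j ∧ j ≤ M ∧ j ∉ Sw := by
      by_contra hc
      push_neg at hc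
      apply hI
      refine ⟨m, M + 1 - m, hm1, ?_⟩
      ext j
      rw [Finset.mem_Ico]
      constructor
      · intro hj
        have h1 := Finset.min'_le Sw j hj
        have h2 := Finset.le_max' Sw j hj
        omega
      · intro hj
        exact hc j hj.1 (by omega)
    obtain ⟨j, hjm, hjM, hjn⟩ := hgap
    have hmj : m < j := by
      rcases lt_or_eq_of_le hjm with h | h
      · exact h
      · exact absurd (h ▸ Sw.min'_mem hSw) hjn
    -- let g be the max element of Sw below j
    have hne2 : (Sw.filter (fun x => x < j)).Nonempty :=
      ⟨m, Finset.mem_filter.mpr ⟨Sw.min'_mem hSw, hmj⟩⟩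
    set g := (Sw.filter (fun x => x < j)).max' hne2 with hg
    have hgmem := (Sw.filter (fun x => x < j)).max'_mem hne2
    rw [Finset.mem_filter] at hgmem
    have hg1 : g + 1 ∉ Sw := by
      intro hc
      have hgj : g + 1 ≠ j := fun h => hjn (h ▸ hc)
      have : g + 1 ∈ Sw.filter (fun x => x < j) :=
        Finset.mem_filter.mpr ⟨hc, by omega⟩
      have := Finset.le_max' _ _ this
      omega
    have hMR : M + 1 ∉ Sw := by
      intro hc
      have := Finset.le_max' Sw _ hc
      omega
    -- two distinct elements of R
    have hRtwo : 1 < (Sw.filter (fun i => ¬ i + 1 ∈ Sw)).card := by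
      rw [Finset.one_lt_card]
      refine ⟨g, Finset.mem_filter.mpr ⟨hgmem.1, hg1⟩, M,
        Finset.mem_filter.mpr ⟨Sw.max'_mem hSw, hMR⟩, ?_⟩
      omega
    have hsub : Sb ⊆ Sw.filter (fun i => i + 1 ∈ Sw) := fun i hi =>
      Finset.mem_filter.mpr ⟨(hf i hi).1, (hf i hi).2⟩
    have hsplit := Finset.card_filter_add_card_filter_not
      (s := Sw) (p := fun i => i + 1 ∈ Sw)
    have h1 := Finset.card_le_card hsub
    omega

open scoped Classical in
/-- For a partition `P` of `AD_k` (given row by row), if `P` is simple then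
(#white removed) − (#black removed) equals the number of altered rows, and if `P` is not
simple the difference is strictly greater. -/
theorem aztec_partition_white_minus_black (k : ℕ)
    (P : ℕ × ℕ → Finset ℕ × Finset ℕ)
    (hvalid : ∀ r ∈ ADRows k,
      (P r).1 ⊆ Finset.Icc 1 (k - r.1 + 1) ∧
      (P r).2 ⊆ Finset.Icc 1 (k - r.1) ∧
      ∀ i ∈ (P r).2, i ∈ (P r).1 ∧ i + 1 ∈ (P r).1) :
    ((∀ r ∈ ADRows k, RowRestrictionSimple (k - r.1 + 1) (P r).1 (P r).2) →
      (∑ r ∈ ADRows k, (P r).1.card) =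
        (∑ r ∈ ADRows k, (P r).2.card) +
          ((ADRows k).filter (fun r => (P r).1.Nonempty ∨ (P r).2.Nonempty)).card) ∧
    ((∃ r ∈ ADRows k, ¬RowRestrictionSimple (k - r.1 + 1) (P r).1 (P r).2) →
      (∑ r ∈ ADRows k, (P r).2.card) +
          ((ADRows k).filter (fun r => (P r).1.Nonempty ∨ (P r).2.Nonempty)).card <
        ∑ r ∈ ADRows k, (P r).1.card) := by
    classical
  have hcard : ((ADRows k).filter (fun r => (P r).1.Nonempty ∨ (P r).2.Nonempty)).card
      = ∑ r ∈ ADRows k, (if (P r).1.Nonempty ∨ (P r).2.Nonempty then 1 else 0) :=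
    Finset.card_filter _ _
  have hb : ∀ r ∈ ADRows k, (P r).2 ⊆ Finset.Icc 1 ((k - r.1 + 1) - 1) := by
    intro r hr
    have := (hvalid r hr).2.1
    simpa using this
  constructor
  · intro hsimp
    rw [hcard, ← Finset.sum_add_distrib]
    apply Finset.sum_congr rfl
    intro r hr
    exact row_eq _ _ _ (hvalid r hr).1 (hsimp r hr)
  · rintro ⟨r0, hr0, hns⟩
    rw [hcard, ← Finset.sum_add_distrib]
    apply Finset.sum_lt_sum
    · intro r hr
      exact row_lower _ _ (hvalid r hr).2.2
    · refine ⟨r0, hr0, ?_⟩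
      have h2 := row_strict (k - r0.1 + 1) _ _ (hvalid r0 hr0).1 (hb r0 hr0)
        (hvalid r0 hr0).2.2 hns
      split_ifs <;> omega
end

section
/- In a row pyramid of length ℓ, for any nontrivial partition removing w white and b black stones, w - b = 1 if and only if the partition is simple, and otherwise w - b ≥ 2. -/
/-- A partition of a row pyramid of length `ℓ` (white stones `1..ℓ`, black stones
`1..ℓ-1`, black stone `i` under white stones `i` and `i+1`) is simple if the removed white
stones form one nonempty consecutive block and all forced black stones are removed. -/
def IsSimpleRowPartition (ℓ : ℕ) (Sw Sb : Finset ℕ) : Prop :=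
  (∃ i w, 1 ≤ i ∧ 1 ≤ w ∧ Sw = Finset.Ico i (i + w)) ∧
  Sb = (Finset.Icc 1 (ℓ - 1)).filter (fun i => i ∈ Sw ∧ i + 1 ∈ Sw)

/-!
The black stones forced by the white set `Sw` are the `i ∈ Sw` with `i + 1 ∈ Sw`. They miss
`max Sw`, so `|Sb| ≤ #forced ≤ |Sw| - 1`. Equality throughout means that `Sb` is the whole
forced set and that every white stone other than the largest has a white right neighbour,
i.e. `Sw` is an interval: exactly the simple partitions.
-/

open Finset

/-- The black stones forced by removing the white stones `s`. -/
def adjacentStarts (s : Finset ℕ) : Finset ℕ :=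
  s.filter (· + 1 ∈ s)

section AdjacentStarts

variable {s : Finset ℕ}

theorem adjacentStarts_subset_erase_max' (hs : s.Nonempty) :
    adjacentStarts s ⊆ s.erase (s.max' hs) := by
  intro i hi
  rw [adjacentStarts, mem_filter] at hi
  have := s.le_max' (i + 1) hi.2
  exact mem_erase.mpr ⟨by omega, hi.1⟩

theorem card_adjacentStarts_add_one_le (hs : s.Nonempty) :
    (adjacentStarts s).card + 1 ≤ s.card := by
  have := card_le_card (adjacentStarts_subset_erase_max' hs)
  rw [card_erase_of_mem (s.max'_mem hs)] at this
  have := hs.card_pos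
  omega

theorem adjacentStarts_Ico (a b : ℕ) : adjacentStarts (Ico a b) = Ico a (b - 1) := by
  ext i
  simp only [adjacentStarts, mem_filter, mem_Ico]
  omega

theorem card_adjacentStarts_Ico {a b : ℕ} (hab : a < b) :
    (adjacentStarts (Ico a b)).card + 1 = (Ico a b).card := by
  rw [adjacentStarts_Ico, Nat.card_Ico, Nat.card_Ico]
  omega

theorem eq_Ico_of_card_adjacentStarts_add_one (hs : s.Nonempty)
    (hcard : (adjacentStarts s).card + 1 = s.card) :
    s = Ico (s.min' hs) (s.max' hs + 1) := by
  have herase : adjacentStarts s = s.erase (s.max' hs) :=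
    eq_of_subset_of_card_le (adjacentStarts_subset_erase_max' hs) (by
      rw [card_erase_of_mem (s.max'_mem hs)]; omega)
  have hsucc : ∀ x ∈ s, x ≠ s.max' hs → x + 1 ∈ s := fun x hx hxM =>
    (mem_filter.mp (herase ▸ mem_erase.mpr ⟨hxM, hx⟩ : x ∈ adjacentStarts s)).2
  have hinterval : ∀ x, s.min' hs ≤ x → x ≤ s.max' hs → x ∈ s := by
    intro x hmin
    induction x, hmin using Nat.le_induction with
    | base => exact fun _ => s.min'_mem hs
    | succ n _ ih => exact fun hn => hsucc n (ih (by omega)) (by omega)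
  ext x
  rw [mem_Ico]
  exact ⟨fun hx => ⟨s.min'_le x hx, Nat.lt_succ_of_le (s.le_max' x hx)⟩,
    fun hx => hinterval x hx.1 (Nat.le_of_lt_succ hx.2)⟩

theorem card_adjacentStarts_add_one_eq_iff (hs : s.Nonempty) :
    (adjacentStarts s).card + 1 = s.card ↔ ∃ a b, a < b ∧ s = Ico a b := by
  constructor
  · intro hcard
    exact ⟨_, _, Nat.lt_succ_of_le (s.min'_le _ (s.max'_mem hs)),
      eq_Ico_of_card_adjacentStarts_add_one hs hcard⟩
  · rintro ⟨a, b, hab, rfl⟩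
    exact card_adjacentStarts_Ico hab

end AdjacentStarts

theorem filter_Icc_eq_adjacentStarts {ℓ : ℕ} {Sw : Finset ℕ} (hw : Sw ⊆ Icc 1 ℓ) :
    (Icc 1 (ℓ - 1)).filter (fun i => i ∈ Sw ∧ i + 1 ∈ Sw) = adjacentStarts Sw := by
  ext i
  simp only [adjacentStarts, mem_filter, mem_Icc]
  constructor
  · exact fun ⟨_, h⟩ => h
  · rintro ⟨hi, hi1⟩
    have := mem_Icc.mp (hw hi)
    have := mem_Icc.mp (hw hi1)
    exact ⟨⟨by omega, by omega⟩, hi, hi1⟩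

theorem isSimpleRowPartition_iff {ℓ : ℕ} {Sw Sb : Finset ℕ} (hw : Sw ⊆ Icc 1 ℓ) :
    IsSimpleRowPartition ℓ Sw Sb ↔
      (∃ a b, a < b ∧ Sw = Ico a b) ∧ Sb = adjacentStarts Sw := by
  rw [IsSimpleRowPartition, filter_Icc_eq_adjacentStarts hw]
  refine and_congr_left fun _ => ⟨?_, ?_⟩
  · rintro ⟨i, w, -, hwpos, hSw⟩
    exact ⟨i, i + w, by omega, hSw⟩
  · rintro ⟨a, b, hab, rfl⟩
    have := mem_Icc.mp (hw (left_mem_Ico.mpr hab))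
    exact ⟨a, b - a, this.1, by omega, by rw [Nat.add_sub_cancel' hab.le]⟩

theorem row_partition_simple_iff_diff_one_general (ℓ : ℕ) (Sw Sb : Finset ℕ)
    (hw : Sw ⊆ Finset.Icc 1 ℓ)
    (hstable : ∀ i ∈ Sb, i ∈ Sw ∧ i + 1 ∈ Sw)
    (hnontrivial : Sw.Nonempty) :
    (Sw.card = Sb.card + 1 ↔ IsSimpleRowPartition ℓ Sw Sb) ∧
    (¬IsSimpleRowPartition ℓ Sw Sb → Sb.card + 2 ≤ Sw.card) := by
  have hforced : Sb ⊆ adjacentStarts Sw := fun i hi => mem_filter.mpr (hstable i hi)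
  have hle := card_le_card hforced
  have hmax := card_adjacentStarts_add_one_le hnontrivial
  have hiff : Sw.card = Sb.card + 1 ↔ IsSimpleRowPartition ℓ Sw Sb := by
    rw [isSimpleRowPartition_iff hw, ← card_adjacentStarts_add_one_eq_iff hnontrivial]
    constructor
    · intro hcard
      exact ⟨by omega, eq_of_subset_of_card_le hforced (by omega)⟩
    · rintro ⟨hcard, rfl⟩
      omega
  refine ⟨hiff, fun hns => ?_⟩
  have := mt hiff.mp hns
  omega

/-- In a row pyramid of length `ℓ`, a nontrivial partition removing `w` white and `b`
black stones has `w - b = 1` if and only if it is simple; otherwise `w - b ≥ 2`. -/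
theorem row_partition_simple_iff_diff_one (ℓ : ℕ) (Sw Sb : Finset ℕ)
    (hw : Sw ⊆ Finset.Icc 1 ℓ) (hb : Sb ⊆ Finset.Icc 1 (ℓ - 1))
    (hstable : ∀ i ∈ Sb, i ∈ Sw ∧ i + 1 ∈ Sw)
    (hnontrivial : Sw.Nonempty) :
    (Sw.card = Sb.card + 1 ↔ IsSimpleRowPartition ℓ Sw Sb) ∧
    (¬IsSimpleRowPartition ℓ Sw Sb → Sb.card + 2 ≤ Sw.card) :=
  row_partition_simple_iff_diff_one_general ℓ Sw Sb hw hstable hnontrivial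
end
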